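/- Let τ : G → H be a half-isomorphism of groups that is neither an isomorphism nor an anti-isomorphism. Then there exist x, y, z ∈ G such that [x,y] ≠ 1, [x,z] ≠ 1, τ(xy) = τ(x)τ(y) ≠ τ(y)τ(x), and τ(xz) = τ(z)τ(x) ≠ τ(x)τ(z). -/

import Mathlib

/-!
If `x` and `y` commute and `τ (x * y) = τ x * τ y`, then `τ x` and `τ y` commute: otherwise
comparing `τ (x * x * y)` computed as `τ (x * x) * τ y` and as `τ x * τ (x * y)` forces
`τ (x * x * y) = τ x * τ x * τ y`, and then `τ (x * x * y * y)`, which equals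
`τ (x * y) * τ (x * y)` because `x * x * y * y = (x * y) * (x * y)`, cannot be either of its
two possible values.

The elements `x` with `τ (x * z) = τ x * τ z` for every `z` form a subgroup, and so do those
with `τ (x * z) = τ z * τ x` for every `z`. An element in neither yields a Gagola–Giuliani
triple, the commutator conditions coming from the previous paragraph. Since a group is not the
union of two proper subgroups, in the absence of such a triple one of the two subgroups is
everything, that is, `τ` is a homomorphism or an anti-homomorphism.
-/

def IsHalfHom {G H : Type*} [Mul G] [Mul H] (τ : G → H) : Prop :=
  ∀ x y : G, τ (x * y) = τ x * τ y ∨ τ (x * y) = τ y * τ x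

theorem inv_mul_inv_mul_mul_eq_one_iff {G : Type*} [Group G] {x y : G} :
    x⁻¹ * y⁻¹ * x * y = 1 ↔ Commute x y := by
  rw [← Commute.inv_inv_iff, ← commutatorElement_eq_one_iff_commute, commutatorElement_def,
    inv_inv, inv_inv]

namespace IsHalfHom

theorem map_mul_self {G H : Type*} [Mul G] [Mul H] {τ : G → H} (hτ : IsHalfHom τ) (x : G) :
    τ (x * x) = τ x * τ x :=
  (hτ x x).elim id id

variable {G H : Type*} [Group G] [Group H] {τ : G → H}

theorem map_one (hτ : IsHalfHom τ) : τ 1 = 1 := by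
  simpa only [one_mul, left_eq_mul] using hτ.map_mul_self 1

theorem commute_map_of_map_mul {x y : G} (hτ : IsHalfHom τ) (hxy : Commute x y)
    (h : τ (x * y) = τ x * τ y) : Commute (τ x) (τ y) := by
  by_contra hne
  rw [commute_iff_eq] at hne
  have hx2y : τ (x * x * y) = τ x * τ x * τ y := by
    rcases hτ x (x * y) with h' | h' <;> rw [← mul_assoc, h] at h'
    · rw [h', mul_assoc]
    · rcases hτ (x * x) y with h'' | h'' <;> rw [h', hτ.map_mul_self] at h''
      · exact (Ne.symm hne (by simpa [mul_assoc] using congrArg ((τ x)⁻¹ * ·) h'')).elim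
      · exact (hne (by simpa [mul_assoc] using congrArg (· * (τ x)⁻¹) h'')).elim
  have hx2y2 : τ (x * x * y * y) = τ x * τ y * (τ x * τ y) := by
    rw [show x * x * y * y = x * y * (x * y) by simp only [mul_assoc, hxy.left_comm y],
      hτ.map_mul_self, h]
  rcases hτ (x * x * y) y with h' | h' <;> rw [hx2y2, hx2y] at h'
  · exact Ne.symm hne (by simpa [mul_assoc] using congrArg ((τ x)⁻¹ * · * (τ y)⁻¹) h')
  · exact hne (by simpa [mul_assoc] using congrArg (· * (τ y)⁻¹ * (τ x)⁻¹) h')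

theorem commute_map {x y : G} (hτ : IsHalfHom τ) (hxy : Commute x y) : Commute (τ x) (τ y) := by
  rcases hτ x y with h | h
  · exact hτ.commute_map_of_map_mul hxy h
  · exact (hτ.commute_map_of_map_mul hxy.symm (hxy.eq ▸ h)).symm

def leftHomSubgroup (hτ : IsHalfHom τ) : Subgroup G where
  carrier := {x | ∀ z, τ (x * z) = τ x * τ z}
  one_mem' z := by rw [one_mul, hτ.map_one, one_mul]
  mul_mem' {x y} hx hy z := by rw [mul_assoc, hx, hy, hx, mul_assoc]
  inv_mem' {x} hx := by
    have hinv_mul (z : G) : τ (x⁻¹ * z) = (τ x)⁻¹ * τ z := by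
      rw [eq_inv_mul_iff_mul_eq, ← hx, mul_inv_cancel_left]
    have hinv : τ x⁻¹ = (τ x)⁻¹ := by simpa [hτ.map_one] using hinv_mul 1
    intro z
    rw [hinv_mul, hinv]

def leftAntiSubgroup (hτ : IsHalfHom τ) : Subgroup G where
  carrier := {x | ∀ z, τ (x * z) = τ z * τ x}
  one_mem' z := by rw [one_mul, hτ.map_one, mul_one]
  mul_mem' {x y} hx hy z := by rw [mul_assoc, hx, hy, hx, mul_assoc]
  inv_mem' {x} hx := by
    have hmul_inv (z : G) : τ (x⁻¹ * z) = τ z * (τ x)⁻¹ := by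
      rw [eq_mul_inv_iff_mul_eq, ← hx, mul_inv_cancel_left]
    have hinv : τ x⁻¹ = (τ x)⁻¹ := by simpa [hτ.map_one] using hmul_inv 1
    intro z
    rw [hmul_inv, hinv]

theorem exists_gagola_giuliani_triple_of_not_mem {x : G} (hτ : IsHalfHom τ)
    (hhom : x ∉ hτ.leftHomSubgroup) (hanti : x ∉ hτ.leftAntiSubgroup) :
    ∃ y z : G, x⁻¹ * y⁻¹ * x * y ≠ 1 ∧ x⁻¹ * z⁻¹ * x * z ≠ 1 ∧
      τ (x * y) = τ x * τ y ∧ τ x * τ y ≠ τ y * τ x ∧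
      τ (x * z) = τ z * τ x ∧ τ z * τ x ≠ τ x * τ z := by
  obtain ⟨y, hy⟩ := not_forall.mp hanti
  obtain ⟨z, hz⟩ := not_forall.mp hhom
  have hxy : τ (x * y) = τ x * τ y := (hτ x y).resolve_right hy
  have hxz : τ (x * z) = τ z * τ x := (hτ x z).resolve_left hz
  have hy' : τ x * τ y ≠ τ y * τ x := hxy ▸ hy
  have hz' : τ z * τ x ≠ τ x * τ z := hxz ▸ hz
  refine ⟨y, z, ?_, ?_, hxy, hy', hxz, hz'⟩
  · rw [Ne, inv_mul_inv_mul_mul_eq_one_iff]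
    exact fun hc => hy' (hτ.commute_map hc).eq
  · rw [Ne, inv_mul_inv_mul_mul_eq_one_iff]
    exact fun hc => hz' (hτ.commute_map hc).eq.symm

end IsHalfHom

theorem gagola_giuliani_triple_general {G H : Type*} [Group G] [Group H] (τ : G → H)
    (hhalf : ∀ x y : G, τ (x * y) = τ x * τ y ∨ τ (x * y) = τ y * τ x)
    (hniso : ¬ ∀ x y : G, τ (x * y) = τ x * τ y)
    (hnanti : ¬ ∀ x y : G, τ (x * y) = τ y * τ x) :
    ∃ x y z : G, x⁻¹ * y⁻¹ * x * y ≠ 1 ∧ x⁻¹ * z⁻¹ * x * z ≠ 1 ∧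
      τ (x * y) = τ x * τ y ∧ τ x * τ y ≠ τ y * τ x ∧
      τ (x * z) = τ z * τ x ∧ τ z * τ x ≠ τ x * τ z := by
  have hτ : IsHalfHom τ := hhalf
  by_contra hno
  have hcover : ((⊤ : Subgroup G) : Set G) ⊆ hτ.leftHomSubgroup ∪ hτ.leftAntiSubgroup := by
    intro x _
    by_contra hx
    rw [Set.mem_union, not_or] at hx
    exact hno ⟨x, hτ.exists_gagola_giuliani_triple_of_not_mem hx.1 hx.2⟩
  rcases SubgroupClass.subset_union.mp hcover with htop | htop
  · exact hniso fun x => htop (Subgroup.mem_top x)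
  · exact hnanti fun x => htop (Subgroup.mem_top x)

/-- A nontrivial half-isomorphism of groups admits a Gagola–Giuliani triple. -/
theorem gagola_giuliani_triple {G H : Type*} [Group G] [Group H] (τ : G → H)
    (hbij : Function.Bijective τ)
    (hhalf : ∀ x y : G, τ (x * y) = τ x * τ y ∨ τ (x * y) = τ y * τ x)
    (hniso : ¬ ∀ x y : G, τ (x * y) = τ x * τ y)
    (hnanti : ¬ ∀ x y : G, τ (x * y) = τ y * τ x) :
    ∃ x y z : G, x⁻¹ * y⁻¹ * x * y ≠ 1 ∧ x⁻¹ * z⁻¹ * x * z ≠ 1 ∧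
      τ (x * y) = τ x * τ y ∧ τ x * τ y ≠ τ y * τ x ∧
      τ (x * z) = τ z * τ x ∧ τ z * τ x ≠ τ x * τ z :=
  gagola_giuliani_triple_general τ hhalf hniso hnanti
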